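/- arXiv:2106.09848 — 4 statements merged into one kernel-verified Lean document; each statement's English description precedes it below -/
import Mathlib

section
/- For every μ ∈ [0,1], every m ≥ 1, and every δ ∈ (0,1), if k is drawn from the Binomial(m, μ) distribution, then with probability at least 1 − δ one has μ ≤ θ̄(k; m, δ), where θ̄ is the Clopper–Pearson upper bound. -/
open Finset

/-- The CDF of the Binomial(m, θ) distribution evaluated at `k`:
`F(k; m, θ) = ∑_{i=0}^{k} C(m,i) θ^i (1−θ)^{m−i}`. -/
noncomputable def binomCDF (m k : ℕ) (θ : ℝ) : ℝ :=
  ∑ i ∈ Finset.range (k + 1), (m.choose i : ℝ) * θ ^ i * (1 - θ) ^ (m - i)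

/-- The Clopper–Pearson upper bound
`θ̄(k; m, δ) := inf({θ ∈ [0,1] : F(k; m, θ) ≤ δ} ∪ {1})`. -/
noncomputable def cpUpper (k m : ℕ) (δ : ℝ) : ℝ :=
  sInf ({θ : ℝ | θ ∈ Set.Icc (0 : ℝ) 1 ∧ binomCDF m k θ ≤ δ} ∪ {1})

/-- The Binomial(m, μ) probability mass function at `k`. -/
noncomputable def binomPMF (m k : ℕ) (μ : ℝ) : ℝ :=
  (m.choose k : ℝ) * μ ^ k * (1 - μ) ^ (m - k)

lemma sum_binomPMF (m : ℕ) (μ : ℝ) : ∑ k ∈ range (m+1), binomPMF m k μ = 1 := by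
  have h := add_pow μ (1-μ) m
  simp only [binomPMF]
  have h2 : ∀ k ∈ range (m+1), (m.choose k : ℝ) * μ^k * (1-μ)^(m-k)
      = μ^k * (1-μ)^(m-k) * (m.choose k : ℝ) := by intros; ring
  rw [Finset.sum_congr rfl h2, ← h]
  norm_num

lemma hasDerivAt_binomCDF (m k : ℕ) (hm : 1 ≤ m) (θ : ℝ) :
    HasDerivAt (fun θ => binomCDF m k θ)
      (-((m : ℝ) * ((m-1).choose k : ℝ) * θ ^ k * (1-θ) ^ (m-1-k))) θ := by
  set A : ℕ → ℝ := fun j => match j with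
    | 0 => 0
    | j+1 => (m : ℝ) * ((m-1).choose j : ℝ) * θ ^ j * (1-θ) ^ (m-1-j) with hA
  have hterm : ∀ i, HasDerivAt (fun θ : ℝ => (m.choose i : ℝ) * θ ^ i * (1-θ) ^ (m-i))
      (A i - A (i+1)) θ := by
    intro i
    have h1 : HasDerivAt (fun θ : ℝ => (m.choose i : ℝ) * θ ^ i)
        ((m.choose i : ℝ) * ((i : ℝ) * θ ^ (i-1))) θ := (hasDerivAt_pow i θ).const_mul _
    have hsub : HasDerivAt (fun θ : ℝ => 1 - θ) (-1) θ := by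
      simpa using (hasDerivAt_const θ (1:ℝ)).fun_sub (hasDerivAt_id θ)
    have h2 : HasDerivAt (fun θ : ℝ => (1-θ) ^ (m-i))
        (((m-i : ℕ) : ℝ) * (1-θ) ^ (m-i-1) * (-1)) θ :=
      (hasDerivAt_pow (m-i) (1-θ)).comp θ hsub
    have h3 := h1.fun_mul h2
    refine h3.congr_deriv ?_
    symm
    match i with
    | 0 =>
      have h0 : m - 0 - 1 = m - 1 - 0 := by omega
      simp only [hA, h0, Nat.choose_zero_right, Nat.cast_one, pow_zero, Nat.sub_zero]
      push_cast
      ring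
    | j+1 =>
      have e1 : (m : ℝ) * ((m-1).choose j : ℝ) = (m.choose (j+1) : ℝ) * ((j+1 : ℕ) : ℝ) := by
        have := Nat.add_one_mul_choose_eq (m-1) j
        rw [Nat.sub_add_cancel hm] at this
        exact_mod_cast congrArg (Nat.cast : ℕ → ℝ) this
      have e2 : (m : ℝ) * ((m-1).choose (j+1) : ℝ) = (m.choose (j+1) : ℝ) * ((m-(j+1) : ℕ) : ℝ) := by
        have h4 := Nat.choose_succ_right_eq m (j+1)
        have h5 := Nat.add_one_mul_choose_eq (m-1) (j+1)
        rw [Nat.sub_add_cancel hm] at h5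
        have : m * (m-1).choose (j+1) = m.choose (j+1) * (m - (j+1)) := by
          rw [h5, h4]
        exact_mod_cast congrArg (Nat.cast : ℕ → ℝ) this
      simp only [hA]
      have e3 : m - 1 - j = m - (j+1) := by omega
      have e4 : m - 1 - (j+1) = m - (j+1) - 1 := by omega
      rw [e3, e4, e1, e2]
      push_cast
      ring
  have hsum := HasDerivAt.fun_sum (fun i (_ : i ∈ range (k+1)) => hterm i)
  have htel : ∑ i ∈ range (k+1), (A i - A (i+1)) = A 0 - A (k+1) :=
    Finset.sum_range_sub' A (k+1)
  rw [htel] at hsum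
  simpa [binomCDF, hA] using hsum

lemma binomCDF_antitoneOn (m k : ℕ) (hm : 1 ≤ m) :
    AntitoneOn (fun θ => binomCDF m k θ) (Set.Icc (0:ℝ) 1) := by
  have hd : ∀ θ : ℝ, HasDerivAt (fun θ => binomCDF m k θ)
      (-((m : ℝ) * ((m-1).choose k : ℝ) * θ ^ k * (1-θ) ^ (m-1-k))) θ :=
    hasDerivAt_binomCDF m k hm
  apply antitoneOn_of_deriv_nonpos (convex_Icc 0 1)
  · exact (Differentiable.continuous (fun x => (hd x).differentiableAt)).continuousOn
  · exact fun x _ => ((hd x).differentiableAt).differentiableWithinAt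
  · intro x hx
    rw [interior_Icc] at hx
    rw [(hd x).deriv]
    have h1 : (0:ℝ) ≤ (m : ℝ) * ((m-1).choose k : ℝ) * x ^ k * (1-x) ^ (m-1-k) := by
      have : (0:ℝ) ≤ 1 - x := by linarith [hx.2]
      have : (0:ℝ) ≤ x := le_of_lt hx.1
      positivity
    linarith

lemma binomPMF_nonneg (m k : ℕ) {μ : ℝ} (h0 : 0 ≤ μ) (h1 : μ ≤ 1) : 0 ≤ binomPMF m k μ := by
  unfold binomPMF
  have : (0:ℝ) ≤ 1 - μ := by linarith
  positivity

/-- **Clopper–Pearson upper bound coverage.** For every `μ ∈ [0,1]`, `m ≥ 1`, and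
`δ ∈ (0,1)`, if `k ~ Binomial(m, μ)`, then with probability at least `1 − δ` one has
`μ ≤ θ̄(k; m, δ)`. -/
theorem cpUpper_coverage (μ : ℝ) (hμ : μ ∈ Set.Icc (0 : ℝ) 1) (m : ℕ) (hm : 1 ≤ m)
    (δ : ℝ) (hδ : δ ∈ Set.Ioo (0 : ℝ) 1) :
    1 - δ ≤ ∑ k ∈ Finset.range (m + 1),
      (if μ ≤ cpUpper k m δ then binomPMF m k μ else 0) := by
  obtain ⟨hμ0, hμ1⟩ := hμ
  obtain ⟨hδ0, hδ1⟩ := hδ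
  set S := (range (m+1)).filter (fun k => ¬ μ ≤ cpUpper k m δ) with hS
  have hsplit : ∑ k ∈ range (m+1), (if μ ≤ cpUpper k m δ then binomPMF m k μ else 0)
      = 1 - ∑ k ∈ S, binomPMF m k μ := by
    have h1 : ∑ k ∈ range (m+1), (if μ ≤ cpUpper k m δ then binomPMF m k μ else 0)
        = ∑ k ∈ (range (m+1)).filter (fun k => μ ≤ cpUpper k m δ), binomPMF m k μ :=
      (Finset.sum_filter _ _).symm
    have h2 := Finset.sum_filter_add_sum_filter_not (range (m+1))
      (fun k => μ ≤ cpUpper k m δ) (fun k => binomPMF m k μ)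
    rw [sum_binomPMF m μ] at h2
    rw [h1, ← hS] at *
    linarith
  rw [hsplit]
  have hkey : ∑ k ∈ S, binomPMF m k μ ≤ δ := by
    rcases S.eq_empty_or_nonempty with hE | hne
    · rw [hE]; simp; linarith
    · set k₀ := S.max' hne with hk₀
      have hk₀S : k₀ ∈ S := S.max'_mem hne
      have hk₀lt : cpUpper k₀ m δ < μ := by
        have := (Finset.mem_filter.mp hk₀S).2
        exact lt_of_not_ge this
      -- get a witness θ in the set with θ < μ
      have hwit : ∃ x ∈ ({θ : ℝ | θ ∈ Set.Icc (0 : ℝ) 1 ∧ binomCDF m k₀ θ ≤ δ} ∪ {1} : Set ℝ),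
          x < μ := by
        by_contra hcon
        push_neg at hcon
        have : μ ≤ cpUpper k₀ m δ :=
          le_csInf ⟨1, Or.inr rfl⟩ (fun x hx => hcon x hx)
        linarith
      obtain ⟨x, hx, hxμ⟩ := hwit
      have hxT : x ∈ {θ : ℝ | θ ∈ Set.Icc (0 : ℝ) 1 ∧ binomCDF m k₀ θ ≤ δ} := by
        rcases hx with h | h
        · exact h
        · exfalso; rw [Set.mem_singleton_iff] at h; rw [h] at hxμ; linarith
      obtain ⟨hxI, hxδ⟩ := hxT
      have hanti := binomCDF_antitoneOn m k₀ hm hxI ⟨hμ0, hμ1⟩ (le_of_lt hxμ)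
      have hCDF : binomCDF m k₀ μ ≤ δ := le_trans hanti hxδ
      have hsub : S ⊆ range (k₀ + 1) := by
        intro k hk
        rw [Finset.mem_range]
        exact Nat.lt_succ_of_le (S.le_max' k hk)
      have hle : ∑ k ∈ S, binomPMF m k μ ≤ ∑ k ∈ range (k₀+1), binomPMF m k μ :=
        Finset.sum_le_sum_of_subset_of_nonneg hsub
          (fun i _ _ => binomPMF_nonneg m i hμ0 hμ1)
      have heq : ∑ k ∈ range (k₀+1), binomPMF m k μ = binomCDF m k₀ μ := rfl
      rw [heq] at hle
      linarith
  linarith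
end

section
/- For every μ ∈ [0,1], every m ≥ 1, and every δ ∈ (0,1), if k is drawn from the Binomial(m, μ) distribution, then with probability at least 1 − δ one has μ ≥ θ̲(k; m, δ), where θ̲ is the Clopper–Pearson lower bound. -/
open Finset

/-- `F(k−1; m, θ)` with the convention `F(−1; m, θ) = 0`; as a sum this is
`∑_{i=0}^{k-1} C(m,i) θ^i (1−θ)^{m−i}`, i.e. a sum over `Finset.range k`. -/
noncomputable def binomCDFPred (m k : ℕ) (θ : ℝ) : ℝ :=
  ∑ i ∈ Finset.range k, (m.choose i : ℝ) * θ ^ i * (1 - θ) ^ (m - i)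

/-- The Clopper–Pearson lower bound
`θ̲(k; m, δ) := sup({θ ∈ [0,1] : 1 − F(k−1; m, θ) ≤ δ} ∪ {0})`. -/
noncomputable def cpLower (k m : ℕ) (δ : ℝ) : ℝ :=
  sSup ({θ : ℝ | θ ∈ Set.Icc (0 : ℝ) 1 ∧ 1 - binomCDFPred m k θ ≤ δ} ∪ {0})

lemma pmf_nonneg (m k : ℕ) {θ : ℝ} (h0 : 0 ≤ θ) (h1 : θ ≤ 1) :
    0 ≤ (m.choose k : ℝ) * θ ^ k * (1 - θ) ^ (m - k) := by
  have : (0:ℝ) ≤ 1 - θ := by linarith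
  positivity

lemma sum_pmf (m : ℕ) (θ : ℝ) :
    ∑ i ∈ Finset.range (m + 1), (m.choose i : ℝ) * θ ^ i * (1 - θ) ^ (m - i) = 1 := by
  have h : (θ + (1 - θ)) ^ m
      = ∑ i ∈ Finset.range (m + 1), θ ^ i * (1 - θ) ^ (m - i) * (m.choose i : ℝ) :=
    add_pow θ (1 - θ) m
  have e : θ + (1 - θ) = 1 := by ring
  rw [e, one_pow] at h
  conv_rhs => rw [h]
  exact Finset.sum_congr rfl fun i _ => by ring

lemma cdf_rec (m k : ℕ) (θ : ℝ) :
    binomCDFPred (m + 1) (k + 1) θ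
      = θ * binomCDFPred m k θ + (1 - θ) * binomCDFPred m (k + 1) θ := by
  unfold binomCDFPred
  rw [Finset.sum_range_succ' (fun i => ((m+1).choose i : ℝ) * θ ^ i * (1 - θ) ^ (m + 1 - i))]
  rw [Finset.sum_range_succ' (fun i => (m.choose i : ℝ) * θ ^ i * (1 - θ) ^ (m - i))]
  have h1 : ∀ i ∈ Finset.range k,
      ((m+1).choose (i+1) : ℝ) * θ ^ (i+1) * (1 - θ) ^ (m + 1 - (i+1))
        = θ * ((m.choose i : ℝ) * θ ^ i * (1 - θ) ^ (m - i))
          + (1 - θ) * ((m.choose (i+1) : ℝ) * θ ^ (i+1) * (1 - θ) ^ (m - (i+1))) := by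
    intro i _
    have hc : ((m+1).choose (i+1) : ℝ) = (m.choose i : ℝ) + (m.choose (i+1) : ℝ) := by
      rw [Nat.choose_succ_succ]; push_cast; ring
    have he : m + 1 - (i + 1) = m - i := by omega
    rw [hc, he]
    by_cases hi : i + 1 ≤ m
    · have : m - i = (m - (i+1)) + 1 := by omega
      rw [this]; ring
    · have : m.choose (i+1) = 0 := Nat.choose_eq_zero_of_lt (by omega)
      rw [this]; push_cast; ring
  rw [Finset.sum_congr rfl h1, Finset.sum_add_distrib, ← Finset.mul_sum, ← Finset.mul_sum]
  simp only [Nat.choose_zero_right, pow_zero, Nat.sub_zero]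
  push_cast
  ring

lemma cdf_mono_k (m k : ℕ) {θ : ℝ} (h0 : 0 ≤ θ) (h1 : θ ≤ 1) :
    binomCDFPred m k θ ≤ binomCDFPred m (k + 1) θ := by
  unfold binomCDFPred
  rw [Finset.sum_range_succ]
  have := pmf_nonneg m k h0 h1
  linarith

lemma cdf_zero_m (k : ℕ) (θ : ℝ) : binomCDFPred 0 (k + 1) θ = 1 := by
  induction k with
  | zero => simp [binomCDFPred]
  | succ j ih =>
    unfold binomCDFPred at ih ⊢
    rw [Finset.sum_range_succ, ih]
    simp

lemma cdf_anti (m : ℕ) : ∀ (k : ℕ) {θ1 θ2 : ℝ}, 0 ≤ θ1 → θ1 ≤ θ2 → θ2 ≤ 1 →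
    binomCDFPred m k θ2 ≤ binomCDFPred m k θ1 := by
  induction m with
  | zero =>
    intro k θ1 θ2 h0 h12 h1
    match k with
    | 0 => simp [binomCDFPred]
    | k + 1 => rw [cdf_zero_m, cdf_zero_m]
  | succ m ih =>
    intro k θ1 θ2 h0 h12 h1
    match k with
    | 0 => simp [binomCDFPred]
    | j + 1 =>
      rw [cdf_rec, cdf_rec]
      have ha : binomCDFPred m j θ2 ≤ binomCDFPred m j θ1 := ih j h0 h12 h1
      have hb : binomCDFPred m (j+1) θ2 ≤ binomCDFPred m (j+1) θ1 := ih (j+1) h0 h12 h1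
      have ht : binomCDFPred m j θ1 ≤ binomCDFPred m (j+1) θ1 :=
        cdf_mono_k m j h0 (le_trans h12 h1)
      nlinarith [mul_le_mul_of_nonneg_left ha (le_trans h0 h12),
        mul_le_mul_of_nonneg_left hb (by linarith : (0:ℝ) ≤ 1 - θ2),
        mul_nonneg (sub_nonneg.2 h12) (sub_nonneg.2 ht)]

/-- **Clopper–Pearson lower bound coverage.** For every `μ ∈ [0,1]`, `m ≥ 1`, and
`δ ∈ (0,1)`, if `k ~ Binomial(m, μ)`, then with probability at least `1 − δ` one has
`μ ≥ θ̲(k; m, δ)`. -/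
theorem cpLower_coverage (μ : ℝ) (hμ : μ ∈ Set.Icc (0 : ℝ) 1) (m : ℕ) (hm : 1 ≤ m)
    (δ : ℝ) (hδ : δ ∈ Set.Ioo (0 : ℝ) 1) :
    1 - δ ≤ ∑ k ∈ Finset.range (m + 1),
      (if cpLower k m δ ≤ μ then binomPMF m k μ else 0) := by
  obtain ⟨hμ0, hμ1⟩ := hμ
  obtain ⟨hδ0, hδ1⟩ := hδ
  have htot : ∑ k ∈ Finset.range (m + 1), binomPMF m k μ = 1 := by
    simpa [binomPMF] using sum_pmf m μ
  have key : ∑ k ∈ Finset.range (m + 1),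
      (if μ < cpLower k m δ then binomPMF m k μ else 0) ≤ δ := by
    rw [← Finset.sum_filter]
    set bs := (Finset.range (m+1)).filter (fun k => μ < cpLower k m δ) with hbs_def
    by_cases hbs : bs.Nonempty
    · set k0 := bs.min' hbs with hk0_def
      have hk0mem : k0 ∈ bs := bs.min'_mem hbs
      rw [hbs_def, Finset.mem_filter, Finset.mem_range] at hk0mem
      obtain ⟨hk0m, hk0bad⟩ := hk0mem
      have hsub : bs ⊆ Finset.Ico k0 (m+1) := by
        intro k hk
        have h1 := bs.min'_le k hk
        rw [hbs_def, Finset.mem_filter, Finset.mem_range] at hk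
        exact Finset.mem_Ico.2 ⟨h1, hk.1⟩
      have h1 : ∑ k ∈ bs, binomPMF m k μ ≤ ∑ k ∈ Finset.Ico k0 (m+1), binomPMF m k μ :=
        Finset.sum_le_sum_of_subset_of_nonneg hsub
          (fun i _ _ => pmf_nonneg m i hμ0 hμ1)
      have h2 : ∑ k ∈ Finset.Ico k0 (m+1), binomPMF m k μ = 1 - binomCDFPred m k0 μ := by
        have hle : k0 ≤ m + 1 := Nat.le_of_lt_succ hk0m |>.trans (Nat.le_succ m)
        have hsplit := Finset.sum_range_add_sum_Ico (fun k => binomPMF m k μ) hle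
        have hF : binomCDFPred m k0 μ = ∑ k ∈ Finset.range k0, binomPMF m k μ := rfl
        rw [hF]
        linarith [hsplit, htot]
      have h3 : 1 - binomCDFPred m k0 μ ≤ δ := by
        unfold cpLower at hk0bad
        have hne : ({θ : ℝ | θ ∈ Set.Icc (0:ℝ) 1 ∧ 1 - binomCDFPred m k0 θ ≤ δ} ∪ {0}).Nonempty :=
          ⟨0, Or.inr rfl⟩
        obtain ⟨x, hx, hμx⟩ := exists_lt_of_lt_csSup hne hk0bad
        rcases hx with ⟨⟨hx0, hx1⟩, hxδ⟩ | hx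
        · have := cdf_anti m k0 hμ0 hμx.le hx1
          linarith
        · have : x = 0 := hx
          linarith
      linarith
    · rw [Finset.not_nonempty_iff_eq_empty] at hbs
      rw [hbs, Finset.sum_empty]
      linarith
  have hsplit : ∀ k, (if cpLower k m δ ≤ μ then binomPMF m k μ else 0)
      = binomPMF m k μ - (if μ < cpLower k m δ then binomPMF m k μ else 0) := by
    intro k
    by_cases h : cpLower k m δ ≤ μ
    · simp [h, not_lt.2 h]
    · simp [h, not_le.1 h]
  rw [Finset.sum_congr rfl (fun k _ => hsplit k), Finset.sum_sub_distrib, htot]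
  linarith
end

section
/- For every m ≥ 2, every integer k with 0 ≤ k ≤ m − 1, and every δ ∈ (0,1), the Clopper–Pearson upper bound satisfies θ̄(k; m, δ) ≤ θ̄(k; m−1, δ); that is, for fixed k it is monotonically non-increasing in m. -/
open Finset

lemma binomCDF_succ_eq (n : ℕ) (θ : ℝ) : ∀ k : ℕ, k ≤ n →
    binomCDF (n + 1) k θ
      = binomCDF n k θ - (n.choose k : ℝ) * θ ^ (k + 1) * (1 - θ) ^ (n - k) := by
  intro k
  induction k with
  | zero =>
    intro _
    simp only [binomCDF, zero_add, Finset.sum_range_one, Nat.sub_zero, pow_zero,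
      Nat.choose_zero_right, Nat.cast_one, pow_succ]
    ring
  | succ k ih =>
    intro hk
    have hk' : k ≤ n := by omega
    have e1 : binomCDF (n + 1) (k + 1) θ
        = binomCDF (n + 1) k θ
          + ((n + 1).choose (k + 1) : ℝ) * θ ^ (k + 1) * (1 - θ) ^ (n + 1 - (k + 1)) := by
      simp [binomCDF, Finset.sum_range_succ]
    have e2 : binomCDF n (k + 1) θ
        = binomCDF n k θ
          + (n.choose (k + 1) : ℝ) * θ ^ (k + 1) * (1 - θ) ^ (n - (k + 1)) := by
      simp [binomCDF, Finset.sum_range_succ]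
    rw [e1, e2, ih hk']
    have hch : ((n + 1).choose (k + 1) : ℝ) = (n.choose k : ℝ) + (n.choose (k + 1) : ℝ) := by
      rw [Nat.choose_succ_succ]; push_cast; ring
    have h2 : n + 1 - (k + 1) = n - k := by omega
    have h3 : n - k = (n - (k + 1)) + 1 := by omega
    rw [hch, h2, h3]
    ring

lemma binomCDF_succ_le (n k : ℕ) (hk : k ≤ n) (θ : ℝ) (h0 : 0 ≤ θ) (h1 : θ ≤ 1) :
    binomCDF (n + 1) k θ ≤ binomCDF n k θ := by
  rw [binomCDF_succ_eq n θ k hk]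
  have hnn : 0 ≤ (n.choose k : ℝ) * θ ^ (k + 1) * (1 - θ) ^ (n - k) := by
    apply mul_nonneg
    · exact mul_nonneg (by positivity) (by positivity)
    · exact pow_nonneg (by linarith) _
  linarith

/-- For every `m ≥ 2`, every `0 ≤ k ≤ m − 1`, and every `δ ∈ (0,1)`, the
Clopper–Pearson upper bound satisfies `θ̄(k; m, δ) ≤ θ̄(k; m−1, δ)`: for fixed `k` it is
monotonically non-increasing in `m`. -/
theorem cpUpper_anti_trials (m : ℕ) (hm : 2 ≤ m) (k : ℕ) (hk : k ≤ m - 1)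
    (δ : ℝ) (hδ : δ ∈ Set.Ioo (0 : ℝ) 1) :
    cpUpper k m δ ≤ cpUpper k (m - 1) δ := by
  obtain ⟨n, rfl⟩ : ∃ n, m = n + 1 := ⟨m - 1, by omega⟩
  have hn : n + 1 - 1 = n := by omega
  rw [hn] at hk ⊢
  unfold cpUpper
  apply csInf_le_csInf
  · refine ⟨0, ?_⟩
    rintro θ (⟨⟨h0, _⟩, _⟩ | h1)
    · exact h0
    · simp at h1; linarith [h1]
  · exact ⟨1, Or.inr rfl⟩
  · rintro θ (⟨⟨h0, h1⟩, hF⟩ | h1)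
    · exact Or.inl ⟨⟨h0, h1⟩, le_trans (binomCDF_succ_le n k hk θ h0 h1) hF⟩
    · exact Or.inr h1
end

section
/- For every m ≥ 2, every integer k with 1 ≤ k ≤ m, and every δ ∈ (0,1), the Clopper–Pearson upper bound satisfies θ̄(k−1; m−1, δ) ≤ θ̄(k; m, δ); that is, it is monotonically non-decreasing when both the sample size and the error count increase by one. -/
open Finset

lemma binomCDF_succ_succ (m k : ℕ) (θ : ℝ) :
    binomCDF (m + 1) (k + 1) θ
      = (1 - θ) * binomCDF m (k + 1) θ + θ * binomCDF m k θ := by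
  unfold binomCDF
  rw [Finset.sum_range_succ' (fun i => ((m+1).choose i : ℝ) * θ ^ i * (1 - θ) ^ (m + 1 - i)),
    Finset.mul_sum, Finset.mul_sum,
    Finset.sum_range_succ' (fun i => (1 - θ) * ((m.choose i : ℝ) * θ ^ i * (1 - θ) ^ (m - i)))]
  have hterm : ∀ j, ((m+1).choose (j+1) : ℝ) * θ ^ (j+1) * (1 - θ) ^ (m + 1 - (j+1))
      = (1 - θ) * ((m.choose (j+1) : ℝ) * θ ^ (j+1) * (1 - θ) ^ (m - (j+1)))
        + θ * ((m.choose j : ℝ) * θ ^ j * (1 - θ) ^ (m - j)) := by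
    intro j
    rw [Nat.choose_succ_succ]
    push_cast
    simp only [Nat.succ_eq_add_one, Nat.succ_sub_succ]
    rcases lt_or_ge j m with hj | hj
    · have h2 : m - j = (m - (j + 1)) + 1 := by omega
      rw [h2, pow_succ]
      ring
    · have h1 : m.choose (j + 1) = 0 := Nat.choose_eq_zero_of_lt (by omega)
      rw [h1]
      push_cast
      ring
  rw [Finset.sum_congr rfl (fun j _ => hterm j)]
  rw [Finset.sum_add_distrib]
  simp [pow_succ]
  ring

lemma binomCDF_nonneg_term (m : ℕ) (θ : ℝ) (h0 : 0 ≤ θ) (h1 : θ ≤ 1) (i : ℕ) :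
    0 ≤ (m.choose i : ℝ) * θ ^ i * (1 - θ) ^ (m - i) := by
  have h2 : (0:ℝ) ≤ 1 - θ := by linarith
  exact mul_nonneg (mul_nonneg (Nat.cast_nonneg _) (pow_nonneg h0 _)) (pow_nonneg h2 _)

lemma binomCDF_mono_k (m k : ℕ) (θ : ℝ) (h0 : 0 ≤ θ) (h1 : θ ≤ 1) :
    binomCDF m k θ ≤ binomCDF m (k + 1) θ := by
  unfold binomCDF
  rw [Finset.sum_range_succ (fun i => (m.choose i : ℝ) * θ ^ i * (1 - θ) ^ (m - i)) (k+1)]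
  have := binomCDF_nonneg_term m θ h0 h1 (k+1)
  linarith

lemma binomCDF_key (m k : ℕ) (θ : ℝ) (h0 : 0 ≤ θ) (h1 : θ ≤ 1) :
    binomCDF m k θ ≤ binomCDF (m + 1) (k + 1) θ := by
  rw [binomCDF_succ_succ]
  have hmono := binomCDF_mono_k m k θ h0 h1
  nlinarith [hmono, sub_nonneg.mpr h1]

/-- For every `m ≥ 2`, every `1 ≤ k ≤ m`, and every `δ ∈ (0,1)`, the Clopper–Pearson
upper bound satisfies `θ̄(k−1; m−1, δ) ≤ θ̄(k; m, δ)`: it is monotonically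
non-decreasing when both the sample size and the error count increase by one. -/
theorem cpUpper_mono_diag (m : ℕ) (hm : 2 ≤ m) (k : ℕ) (hk1 : 1 ≤ k) (hk2 : k ≤ m)
    (δ : ℝ) (hδ : δ ∈ Set.Ioo (0 : ℝ) 1) :
    cpUpper (k - 1) (m - 1) δ ≤ cpUpper k m δ := by
  unfold cpUpper
  apply csInf_le_csInf
  · refine ⟨0, ?_⟩
    rintro θ (⟨⟨h0, _⟩, _⟩ | h)
    · exact h0
    · simp only [Set.mem_singleton_iff] at h; rw [h]; norm_num
  · exact ⟨1, Or.inr rfl⟩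
  · rintro θ (⟨⟨h0, h1⟩, hF⟩ | h)
    · left
      refine ⟨⟨h0, h1⟩, le_trans ?_ hF⟩
      have hm' : (m - 1) + 1 = m := by omega
      have hk' : (k - 1) + 1 = k := by omega
      calc binomCDF (m - 1) (k - 1) θ ≤ binomCDF ((m-1) + 1) ((k-1) + 1) θ :=
            binomCDF_key (m-1) (k-1) θ h0 h1
        _ = binomCDF m k θ := by rw [hm', hk']
    · exact Or.inr h
end
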